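/- arXiv:2011.10622 — 3 statements merged into one kernel-verified Lean document; each statement's English description precedes it below -/
import Mathlib

section
/- Let R be the commutative ℤ/2-algebra generated by elements y_α of degree 1, indexed by α ∈ (ℤ/2)ⁿ ∖ {0}, subject to the relations y_α y_β + y_α y_γ + y_β y_γ = 0 whenever α + β + γ = 0 in (ℤ/2)ⁿ. Then R is isomorphic to the subring of ℤ/2[x₁,…,xₙ][x_α⁻¹ : α ≠ 0] generated by the elements x_α⁻¹, where x_α = α₁x₁ + ⋯ + αₙxₙ, via y_α ↦ x_α⁻¹. -/
open MvPolynomial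

/-- The linear form `x_α = α₁x₁ + ⋯ + αₙxₙ` over `𝔽₂`. -/
noncomputable def xlin {n : ℕ} (α : Fin n → ZMod 2) : MvPolynomial (Fin n) (ZMod 2) :=
  ∑ i, C (α i) * X i

/-- The multiplicative set of the nonzero linear forms. -/
noncomputable def linForms (n : ℕ) : Submonoid (MvPolynomial (Fin n) (ZMod 2)) :=
  Submonoid.closure (xlin '' {α : Fin n → ZMod 2 | α ≠ 0})

/-- `x_α⁻¹` in the localization at all nonzero linear forms. -/
noncomputable def xinv {n : ℕ} (α : Fin n → ZMod 2) (hα : α ≠ 0) :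
    Localization (linForms n) :=
  Localization.mk 1 ⟨xlin α, Submonoid.subset_closure ⟨α, hα, rfl⟩⟩

/-- The set of the elements `x_α⁻¹`, `α ≠ 0`. -/
noncomputable def xinvSet (n : ℕ) : Set (Localization (linForms n)) :=
  {x | ∃ (α : Fin n → ZMod 2) (hα : α ≠ 0), x = xinv α hα}

/-- The ideal of relations `y_αy_β + y_αy_γ + y_βy_γ` for `α + β + γ = 0`. -/
noncomputable def relIdeal (n : ℕ) :
    Ideal (MvPolynomial {α : Fin n → ZMod 2 // α ≠ 0} (ZMod 2)) :=
  Ideal.span {q | ∃ a b c : {α : Fin n → ZMod 2 // α ≠ 0},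
    (a : Fin n → ZMod 2) + b + c = 0 ∧ q = X a * X b + X a * X c + X b * X c}

/-- The abstract ring `R` generated by the `y_α` subject to the relations. -/
noncomputable abbrev presentedRing (n : ℕ) :=
  MvPolynomial {α : Fin n → ZMod 2 // α ≠ 0} (ZMod 2) ⧸ relIdeal n

/-!
The map `y_α ↦ x_α⁻¹` kills the relations, because
`x_α⁻¹x_β⁻¹ + x_α⁻¹x_γ⁻¹ + x_β⁻¹x_γ⁻¹ = (x_α + x_β + x_γ) / (x_α x_β x_γ)`. For injectivity, let
`lead α` be the index of the first nonzero coordinate of `α`. If `lead α = lead β` with `α ≠ β`,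
then `γ = α + β` leads strictly later, and the relation `y_α y_β = y_α y_γ + y_β y_γ` pushes
leading indices up; so modulo the relations every polynomial is a combination of standard
monomials, in which distinct variables have distinct leading indices. The images of the standard
monomials are linearly independent over `𝔽₂`, by induction on `n`: expanded as rational functions
of `x₀` over `𝔽₂(x₁, …, xₙ)`, a standard monomial contains at most one `y_α` with `α₀ = 1`, so its
image is a coefficient (the image of a standard monomial in one variable fewer) times a single
partial fraction `(x₀ + x_β)⁻ᵏ`, and partial fraction decompositions are unique.
-/

section LinearForms

variable {n : ℕ}

theorem coeff_single_xlin (α : Fin n → ZMod 2) (i : Fin n) :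
    coeff (Finsupp.single i 1) (xlin α) = α i := by
  classical
  simp [xlin, coeff_sum, coeff_C_mul, coeff_X, Finsupp.single_eq_single_iff]

theorem xlin_injective : Function.Injective (xlin (n := n)) := fun α β h =>
  funext fun i => by rw [← coeff_single_xlin α i, h, coeff_single_xlin]

@[simp]
theorem xlin_zero : xlin (0 : Fin n → ZMod 2) = 0 := by simp [xlin]

theorem xlin_add (α β : Fin n → ZMod 2) : xlin (α + β) = xlin α + xlin β := by
  simp [xlin, add_mul, Finset.sum_add_distrib]

theorem xlin_ne_zero {α : Fin n → ZMod 2} (hα : α ≠ 0) : xlin α ≠ 0 :=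
  fun h => hα (xlin_injective (h.trans xlin_zero.symm))

theorem linForms_le_nonZeroDivisors : linForms n ≤ nonZeroDivisors _ :=
  Submonoid.closure_le.2 fun _ ⟨_, hα, hx⟩ =>
    hx ▸ mem_nonZeroDivisors_of_ne_zero (xlin_ne_zero hα)

abbrev FracField (n : ℕ) := FractionRing (MvPolynomial (Fin n) (ZMod 2))

noncomputable abbrev xlinFrac (α : Fin n → ZMod 2) : FracField n := algebraMap _ _ (xlin α)

theorem xlinFrac_injective : Function.Injective (xlinFrac (n := n)) :=
  (IsFractionRing.injective _ _).comp xlin_injective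

theorem xlinFrac_ne_zero {α : Fin n → ZMod 2} (hα : α ≠ 0) : xlinFrac α ≠ 0 :=
  (map_ne_zero_iff _ (IsFractionRing.injective _ _)).2 (xlin_ne_zero hα)

end LinearForms

theorem ZMod.eq_one_of_ne_zero_of_two {x : ZMod 2} (hx : x ≠ 0) : x = 1 := by
  revert x; decide

theorem Pi.add_eq_zero_iff_eq_of_charTwo {ι R : Type*} [Ring R] [CharP R 2] {f g : ι → R} :
    f + g = 0 ↔ f = g :=
  ⟨fun h => funext fun i => CharTwo.add_eq_zero.1 (congrFun h i),
    fun h => h ▸ funext fun _ => CharTwo.add_self_eq_zero _⟩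

abbrev NonzeroVec (n : ℕ) := {α : Fin n → ZMod 2 // α ≠ 0}

namespace NonzeroVec

variable {n : ℕ}

noncomputable def lead (a : NonzeroVec n) : Fin n :=
  (Finset.univ.filter fun i => a.1 i ≠ 0).min' <| by
    obtain ⟨i, hi⟩ := Function.ne_iff.1 a.2
    exact ⟨i, by simpa using hi⟩

theorem apply_lead (a : NonzeroVec n) : a.1 (lead a) = 1 :=
  ZMod.eq_one_of_ne_zero_of_two
    (Finset.mem_filter.1 (Finset.min'_mem (Finset.univ.filter fun i => a.1 i ≠ 0) _)).2

theorem apply_eq_zero_of_lt_lead {a : NonzeroVec n} {j : Fin n} (h : j < lead a) : a.1 j = 0 := by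
  by_contra hj
  exact (Finset.min'_le _ j (by simp [hj])).not_gt h

theorem lead_eq {a : NonzeroVec n} {i : Fin n} (hi : a.1 i ≠ 0) (h : ∀ j < i, a.1 j = 0) :
    lead a = i := by
  refine (Finset.min'_le _ i (by simp [hi])).antisymm (not_lt.1 fun hlt => ?_)
  exact zero_ne_one ((h _ hlt).symm.trans (apply_lead a))

theorem lead_lt_lead_add {a b c : NonzeroVec n} (hl : lead a = lead b) (hc : c.1 = a.1 + b.1) :
    lead a < lead c := by
  refine lt_of_le_of_ne (not_lt.1 fun hlt => ?_) fun heq => ?_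
  · have := apply_lead c
    rw [hc, Pi.add_apply, apply_eq_zero_of_lt_lead hlt,
      apply_eq_zero_of_lt_lead (hl ▸ hlt)] at this
    exact zero_ne_one this
  · have := apply_lead c
    rw [hc, Pi.add_apply, ← heq, apply_lead, hl, apply_lead] at this
    exact absurd this (by decide)

end NonzeroVec

open NonzeroVec

section Spanning

open Finsupp

variable {n : ℕ}

def IsStandard (d : NonzeroVec n →₀ ℕ) : Prop :=
  Set.InjOn lead (d.support : Set (NonzeroVec n))

noncomputable def standardSpan (n : ℕ) :
    Submodule (ZMod 2) (MvPolynomial (NonzeroVec n) (ZMod 2)) :=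
  Submodule.span (ZMod 2) (Set.range fun d : {d : NonzeroVec n →₀ ℕ // IsStandard d} =>
    monomial d.1 1) ⊔ (relIdeal n).restrictScalars (ZMod 2)

theorem X_mul_X_sub_mem_relIdeal {a b c : NonzeroVec n} (hc : c.1 = a.1 + b.1) :
    X a * X b - (X a * X c + X b * X c) ∈ relIdeal n := by
  rw [CharTwo.sub_eq_add, ← add_assoc]
  exact Ideal.subset_span ⟨a, b, c, by rw [hc, Pi.add_eq_zero_iff_eq_of_charTwo], rfl⟩

theorem Finsupp.exists_eq_add_single_add_single {ι : Type*} {d : ι →₀ ℕ} {a b : ι}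
    (ha : a ∈ d.support) (hb : b ∈ d.support) (hab : a ≠ b) :
    ∃ d₀, d = d₀ + single a 1 + single b 1 := by
  refine ⟨d - single b 1 - single a 1, ?_⟩
  rw [sub_add_single_one_cancel, sub_add_single_one_cancel (mem_support_iff.1 hb)]
  simpa [single_apply, hab.symm] using mem_support_iff.1 ha

noncomputable def leadWeight (n : ℕ) (a : NonzeroVec n) : ℕ := n - lead a

/-- Straightening `y_a y_b ↦ y_a y_c + y_b y_c` replaces `y_b` by `y_c` with `lead c > lead b`,
so it lowers `weight (leadWeight n)`. -/
theorem monomial_mem_standardSpan (d : NonzeroVec n →₀ ℕ) :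
    monomial d 1 ∈ standardSpan n := by
  induction hN : weight (leadWeight n) d using Nat.strong_induction_on generalizing d with
  | _ N ih =>
  by_cases hd : IsStandard d
  · exact Submodule.mem_sup_left (Submodule.subset_span ⟨⟨d, hd⟩, rfl⟩)
  obtain ⟨a, ha, b, hb, hlead, hab⟩ :
      ∃ a ∈ d.support, ∃ b ∈ d.support, lead a = lead b ∧ a ≠ b := by
    simpa [IsStandard, Set.InjOn] using hd
  obtain ⟨d₀, rfl⟩ := exists_eq_add_single_add_single ha hb hab
  let c : NonzeroVec n :=
    ⟨a.1 + b.1, fun h => hab (Subtype.ext (Pi.add_eq_zero_iff_eq_of_charTwo.1 h))⟩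
  have hac : lead a < lead c := lead_lt_lead_add hlead rfl
  have hweight (e : NonzeroVec n) (he : lead e = lead a) :
      weight (leadWeight n) (d₀ + single e 1 + single c 1) < N := by
    have := (lead c).isLt
    simp only [← hN, map_add, weight_single, leadWeight, smul_eq_mul, one_mul]
    omega
  have hrel := Ideal.mul_mem_left _ (monomial d₀ 1) (X_mul_X_sub_mem_relIdeal (c := c) rfl)
  simp only [mul_sub, mul_add, X, monomial_mul, mul_one, ← add_assoc] at hrel
  rw [← sub_add_cancel (monomial (d₀ + single a 1 + single b 1) 1)
    (monomial (d₀ + single a 1 + single c 1) 1 + monomial (d₀ + single b 1 + single c 1) 1)]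
  exact add_mem (Submodule.mem_sup_right hrel)
    (add_mem (ih _ (hweight a rfl) _ rfl) (ih _ (hweight b hlead.symm) _ rfl))

theorem mem_standardSpan (p : MvPolynomial (NonzeroVec n) (ZMod 2)) : p ∈ standardSpan n :=
  Submodule.span_le.2 (Set.range_subset_iff.2 fun d => by
    simpa using monomial_mem_standardSpan d) ((basisMonomials _ (ZMod 2)).mem_span p)

end Spanning

section PartialFractions

open Polynomial

variable {F : Type*} [Field F]

theorem RatFunc.X_add_C_ne_zero (a : F) : (RatFunc.X + RatFunc.C a : RatFunc F) ≠ 0 := by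
  rw [← RatFunc.algebraMap_X, ← RatFunc.algebraMap_C, ← map_add]
  exact RatFunc.algebraMap_ne_zero (Polynomial.X_add_C_ne_zero a)

/-- Uniqueness of partial fraction decompositions with the linear denominators `X + c i`. -/
theorem linearIndependent_inv_X_add_C_pow {I : Type*} {c : I → F} (hc : Function.Injective c) :
    LinearIndependent F fun p : Option (I × ℕ) =>
      p.elim 1 fun p => (RatFunc.X + RatFunc.C (c p.1))⁻¹ ^ (p.2 + 1) := by
  classical
  refine linearIndependent_iff.2 fun l hl => ?_
  set s : Finset I := l.support.biUnion fun i => i.elim ∅ fun p => {p.1}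
  set N : ℕ := l.support.sup fun i => i.elim 0 fun p => p.2 + 1
  have hsupp : l.support ⊆ Finset.insertNone (s ×ˢ Finset.range N) := by
    rintro (_ | ⟨a, k⟩) hi
    · simp
    · have hs : a ∈ s := Finset.mem_biUnion.2 ⟨_, hi, by simp⟩
      have hN : k + 1 ≤ N :=
        Finset.le_sup (f := fun i : Option (I × ℕ) => i.elim 0 fun p => p.2 + 1) hi
      simp [hs, Nat.lt_of_succ_le hN]
  have hsum : algebraMap F[X] (RatFunc F) (Polynomial.C (l none)) + ∑ a ∈ s, ∑ j : Fin N,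
      algebraMap F[X] (RatFunc F) (Polynomial.C (l (some (a, j)))) *
        (RatFunc.X + RatFunc.C (c a))⁻¹ ^ (j.1 + 1) = 0 := by
    rw [← hl, Finsupp.linearCombination_apply, Finsupp.sum_of_support_subset _ hsupp
      (fun p r => r • p.elim 1 fun p => (RatFunc.X + RatFunc.C (c p.1))⁻¹ ^ (p.2 + 1))
      (fun _ _ => zero_smul _ _), Finset.sum_insertNone, Finset.sum_product]
    simp only [Option.elim, RatFunc.smul_eq_C_mul, RatFunc.algebraMap_C, mul_one]
    congr 1
    exact Finset.sum_congr rfl fun a _ =>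
      Fin.sum_univ_eq_sum_range (fun j => RatFunc.C (l (some (a, j))) * _ ^ (j + 1)) N
  obtain ⟨hnone, hsome⟩ := quo_add_sum_rem_mul_pow_inverse_unique
    (g := fun a => Polynomial.X + Polynomial.C (c a)) (fun a _ => monic_X_add_C (c a))
    (fun a _ b _ hab => by simpa [sub_eq_add_neg] using
      (pairwise_coprime_X_sub_C (neg_injective.comp hc) hab :
        IsCoprime (Polynomial.X - Polynomial.C (-c a)) (Polynomial.X - Polynomial.C (-c b))))
    (fun a _ => by simp [inv_mul_cancel₀ (RatFunc.X_add_C_ne_zero (c a))])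
    (fun a _ j => by simp [degree_C_lt]) (fun a _ j => by simp) (q₂ := 0) (r₂ := 0)
    (hsum.trans (by simp))
  ext (_ | ⟨a, k⟩)
  · simpa using hnone
  · by_cases hi : some (a, k) ∈ l.support
    · have hk : a ∈ s ∧ k ∈ Finset.range N := by simpa using hsupp hi
      simpa using congrFun (hsome a hk.1) ⟨k, Finset.mem_range.1 hk.2⟩
    · exact Finsupp.notMem_support_iff.1 hi

theorem linearIndependent_prod_inv_X_add_C_pow {I : Type*} {c : I → F}
    (hc : Function.Injective c) :
    LinearIndependent F fun f : {f : I →₀ ℕ // f.support.card ≤ 1} =>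
      f.1.prod fun i k => (RatFunc.X + RatFunc.C (c i))⁻¹ ^ k := by
  classical
  let e : Option (I × ℕ) → {f : I →₀ ℕ // f.support.card ≤ 1} := fun p =>
    p.elim ⟨0, by simp⟩ fun p => ⟨Finsupp.single p.1 (p.2 + 1), by
      rw [Finsupp.support_single _ p.2.succ_ne_zero, Finset.card_singleton]⟩
  have he : Function.Bijective e := by
    refine ⟨?_, fun ⟨f, hf⟩ => ?_⟩
    · rintro (_ | ⟨i, k⟩) (_ | ⟨j, l⟩) h <;>
        simp_all [-Finsupp.single_add, e, Finsupp.single_eq_single_iff, Subtype.ext_iff,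
          @eq_comm (I →₀ ℕ) 0]
    · rcases Nat.le_one_iff_eq_zero_or_eq_one.1 hf with h | h
      · exact ⟨none, Subtype.ext (Finsupp.support_eq_empty.1 (Finset.card_eq_zero.1 h)).symm⟩
      · obtain ⟨i, hi⟩ := Finset.card_eq_one.1 h
        obtain ⟨hfi, hf⟩ := Finsupp.support_eq_singleton.1 hi
        have hfi' : f i - 1 + 1 = f i := Nat.sub_add_cancel (Nat.one_le_iff_ne_zero.2 hfi)
        exact ⟨some (i, f i - 1), Subtype.ext (by simp [-Finsupp.single_add, e, hfi', ← hf])⟩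
  refine (linearIndependent_equiv (Equiv.ofBijective e he)).1 ?_
  convert linearIndependent_inv_X_add_C_pow hc with p
  rcases p with _ | ⟨i, k⟩ <;> simp [-Finsupp.single_add, e]

end PartialFractions

section Expansion

variable {n : ℕ}

theorem finSuccEquiv_xlin_cons (h : ZMod 2) (β : Fin n → ZMod 2) :
    finSuccEquiv (ZMod 2) n (xlin (Fin.cons h β)) =
      Polynomial.C (C h) * Polynomial.X + Polynomial.C (xlin β) := by
  simp only [xlin, Fin.sum_univ_succ, Fin.cons_zero, Fin.cons_succ, map_add, map_sum, map_mul,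
    finSuccEquiv_X_zero, finSuccEquiv_X_succ]
  simp [finSuccEquiv_apply]

/-- `MvPolynomial (Fin (n + 1))` as rational functions in `x₀` over `FracField n`. -/
noncomputable def finSuccToRatFunc (n : ℕ) :
    MvPolynomial (Fin (n + 1)) (ZMod 2) →+* RatFunc (FracField n) :=
  ((algebraMap _ _).comp (Polynomial.mapRingHom (algebraMap _ (FracField n)))).comp
    (finSuccEquiv (ZMod 2) n).toRingEquiv.toRingHom

theorem finSuccToRatFunc_injective : Function.Injective (finSuccToRatFunc n) :=
  (RatFunc.algebraMap_injective _).comp <|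
    (Polynomial.map_injective _ (IsFractionRing.injective _ _)).comp
    (finSuccEquiv (ZMod 2) n).injective

noncomputable def finSuccFrac (n : ℕ) : FracField (n + 1) →+* RatFunc (FracField n) :=
  IsFractionRing.lift finSuccToRatFunc_injective

theorem finSuccFrac_xlinFrac_cons (h : ZMod 2) (β : Fin n → ZMod 2) :
    finSuccFrac n (xlinFrac (Fin.cons h β)) =
      RatFunc.C (algebraMap _ _ h) * RatFunc.X + RatFunc.C (xlinFrac β) := by
  rw [finSuccFrac, IsFractionRing.lift_algebraMap, finSuccToRatFunc]
  simp [finSuccEquiv_xlin_cons,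
    IsScalarTower.algebraMap_apply (ZMod 2) (MvPolynomial (Fin n) (ZMod 2)) (FracField n)]

end Expansion

theorem Finsupp.prod_eq_prod_sumFinsuppEquivProdFinsupp {α β γ M N : Type*} [Zero M]
    [CommMonoid N] (e : α ≃ β ⊕ γ) (d : α →₀ M) (g : α → M → N) :
    d.prod g =
      (sumFinsuppEquivProdFinsupp (d.equivMapDomain e)).1.prod (fun b => g (e.symm (.inl b))) *
        (sumFinsuppEquivProdFinsupp (d.equivMapDomain e)).2.prod
          (fun c => g (e.symm (.inr c))) := by
  have h := prod_sumElim (sumFinsuppEquivProdFinsupp (d.equivMapDomain e)).1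
    (sumFinsuppEquivProdFinsupp (d.equivMapDomain e)).2 fun s => g (e.symm s)
  rw [← sumFinsuppEquivProdFinsupp_symm_apply, Equiv.symm_apply_apply, prod_equivMapDomain] at h
  simpa [Function.comp_def] using h

section HeadSplit

variable {n : ℕ}

def headSplit (n : ℕ) : NonzeroVec (n + 1) ≃ NonzeroVec n ⊕ (Fin n → ZMod 2) where
  toFun a :=
    if h : a.1 0 = 0 then
      .inl ⟨Fin.tail a.1, fun ht => a.2 (funext fun i => Fin.cases h (fun j => congrFun ht j) i)⟩
    else .inr (Fin.tail a.1)
  invFun := Sum.elim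
    (fun b => ⟨Fin.cons 0 b.1, fun h => b.2 (funext fun j => by simpa using congrFun h j.succ)⟩)
    (fun β => ⟨Fin.cons 1 β, fun h => by simpa using congrFun h 0⟩)
  left_inv a := by
    ext i
    by_cases h : a.1 0 = 0 <;> cases i using Fin.cases <;>
      simp [h, ZMod.eq_one_of_ne_zero_of_two, Fin.tail]
  right_inv := by
    rintro (b | β) <;> simp

@[simp]
theorem coe_headSplit_symm_inl (b : NonzeroVec n) :
    ((headSplit n).symm (.inl b) : Fin (n + 1) → ZMod 2) = Fin.cons 0 b.1 := rfl

@[simp]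
theorem coe_headSplit_symm_inr (β : Fin n → ZMod 2) :
    ((headSplit n).symm (.inr β) : Fin (n + 1) → ZMod 2) = Fin.cons 1 β := rfl

theorem lead_headSplit_symm_inl (b : NonzeroVec n) :
    lead ((headSplit n).symm (.inl b)) = (lead b).succ :=
  lead_eq (by simp [apply_lead]) fun j hj => by
    cases j using Fin.cases with
    | zero => simp
    | succ j => simpa using apply_eq_zero_of_lt_lead (Fin.succ_lt_succ_iff.1 hj)

theorem lead_headSplit_symm_inr (β : Fin n → ZMod 2) : lead ((headSplit n).symm (.inr β)) = 0 :=
  lead_eq (by simp) fun j hj => absurd hj (Fin.not_lt_zero j)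

/-- The exponents of the variables `y_(0, b)` and of the variables `y_(1, β)`. -/
noncomputable def splitExponent (n : ℕ) :
    (NonzeroVec (n + 1) →₀ ℕ) ≃ (NonzeroVec n →₀ ℕ) × ((Fin n → ZMod 2) →₀ ℕ) :=
  (Finsupp.equivCongrLeft (headSplit n)).trans Finsupp.sumFinsuppEquivProdFinsupp

@[simp]
theorem splitExponent_fst_apply (d : NonzeroVec (n + 1) →₀ ℕ) (b : NonzeroVec n) :
    (splitExponent n d).1 b = d ((headSplit n).symm (.inl b)) := rfl

@[simp]
theorem splitExponent_snd_apply (d : NonzeroVec (n + 1) →₀ ℕ) (β : Fin n → ZMod 2) :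
    (splitExponent n d).2 β = d ((headSplit n).symm (.inr β)) := rfl

theorem prod_splitExponent {M : Type*} [CommMonoid M] (d : NonzeroVec (n + 1) →₀ ℕ)
    (g : NonzeroVec (n + 1) → ℕ → M) :
    d.prod g = (splitExponent n d).1.prod (fun b => g ((headSplit n).symm (.inl b))) *
      (splitExponent n d).2.prod (fun β => g ((headSplit n).symm (.inr β))) :=
  Finsupp.prod_eq_prod_sumFinsuppEquivProdFinsupp (headSplit n) d g

theorem IsStandard.splitExponent_fst {d : NonzeroVec (n + 1) →₀ ℕ} (hd : IsStandard d) :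
    IsStandard (splitExponent n d).1 := fun b hb b' hb' h =>
  Sum.inl_injective <| (headSplit n).symm.injective <|
    hd (by simpa using hb) (by simpa using hb')
      (by rw [lead_headSplit_symm_inl, lead_headSplit_symm_inl, h])

theorem IsStandard.card_support_splitExponent_snd_le {d : NonzeroVec (n + 1) →₀ ℕ}
    (hd : IsStandard d) : (splitExponent n d).2.support.card ≤ 1 :=
  Finset.card_le_one.2 fun β hβ β' hβ' =>
    Sum.inr_injective <| (headSplit n).symm.injective <|
      hd (by simpa using hβ) (by simpa using hβ')
        (by rw [lead_headSplit_symm_inr, lead_headSplit_symm_inr])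

end HeadSplit

section Independence

variable {n : ℕ}

noncomputable def toFracField (n : ℕ) :
    MvPolynomial (NonzeroVec n) (ZMod 2) →ₐ[ZMod 2] FracField n :=
  aeval fun a => (xlinFrac a.1)⁻¹

theorem toFracField_monomial (d : NonzeroVec n →₀ ℕ) :
    toFracField n (monomial d 1) = d.prod fun a k => (xlinFrac a.1)⁻¹ ^ k := by
  simp [toFracField, aeval_monomial]

theorem finSuccFrac_toFracField_monomial (d : NonzeroVec (n + 1) →₀ ℕ) :
    finSuccFrac n (toFracField (n + 1) (monomial d 1)) =
      toFracField n (monomial (splitExponent n d).1 1) •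
        (splitExponent n d).2.prod fun β k => (RatFunc.X + RatFunc.C (xlinFrac β))⁻¹ ^ k := by
  rw [toFracField_monomial, map_finsuppProd, prod_splitExponent, toFracField_monomial,
    RatFunc.smul_eq_C_mul, map_finsuppProd]
  simp [finSuccFrac_xlinFrac_cons]

theorem linearIndependent_toFracField_standard :
    ∀ n, LinearIndependent (ZMod 2)
      fun d : {d : NonzeroVec n →₀ ℕ // IsStandard d} => toFracField n (monomial d.1 1)
  | 0 => by
    have : IsEmpty (NonzeroVec 0) := ⟨fun a => a.2 (Subsingleton.elim _ _)⟩
    exact .of_subsingleton ⟨0, by simp [IsStandard]⟩ (by simp)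
  | n + 1 => by
    let split (d : {d : NonzeroVec (n + 1) →₀ ℕ // IsStandard d}) :
        {d : NonzeroVec n →₀ ℕ // IsStandard d} ×
          {f : (Fin n → ZMod 2) →₀ ℕ // f.support.card ≤ 1} :=
      (⟨_, d.2.splitExponent_fst⟩, ⟨_, d.2.card_support_splitExponent_snd_le⟩)
    have hsplit : Function.Injective split := fun d d' h => Subtype.ext <|
      (splitExponent n).injective (Prod.ext (congrArg (·.1.1) h) (congrArg (·.2.1) h))
    have hprod := (linearIndependent_smul (linearIndependent_toFracField_standard n)
      (linearIndependent_prod_inv_X_add_C_pow xlinFrac_injective)).comp split hsplit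
    refine .of_comp ((finSuccFrac n).toAddMonoidHom.toZModLinearMap 2) ?_
    convert hprod using 1
    · exact funext fun d => finSuccFrac_toFracField_monomial d.1
    · rfl -- the additive structures of `RatFunc` as a field and as a `ZMod 2`-module agree

theorem eq_zero_of_mem_span_standard {p : MvPolynomial (NonzeroVec n) (ZMod 2)}
    (hp : p ∈ Submodule.span (ZMod 2)
      (Set.range fun d : {d : NonzeroVec n →₀ ℕ // IsStandard d} => monomial d.1 1))
    (h : toFracField n p = 0) : p = 0 := by
  rw [← Finsupp.range_linearCombination] at hp
  obtain ⟨l, rfl⟩ := hp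
  rw [← AlgHom.toLinearMap_apply, Finsupp.apply_linearCombination] at h
  rw [linearIndependent_iff.1 (linearIndependent_toFracField_standard n) l h, map_zero]

end Independence

theorem mul_add_mul_add_mul_eq_zero {R : Type*} [CommRing R] {a b c u v w : R}
    (hu : u * a = 1) (hv : v * b = 1) (hw : w * c = 1) (habc : a + b + c = 0) :
    u * v + u * w + v * w = 0 := by
  linear_combination u * v * w * habc - u * v * hw - u * w * hv - v * w * hu

section Localization

variable {n : ℕ}

noncomputable def toLocalization (n : ℕ) :
    MvPolynomial (NonzeroVec n) (ZMod 2) →ₐ[ZMod 2] Localization (linForms n) :=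
  aeval fun a => xinv a.1 a.2

theorem xinv_mul_algebraMap (α : Fin n → ZMod 2) (hα : α ≠ 0) :
    xinv α hα * algebraMap _ _ (xlin α) = 1 := by
  rw [xinv, Localization.mk_eq_mk', IsLocalization.mk'_spec, map_one]

theorem relIdeal_le_ker_toLocalization : relIdeal n ≤ RingHom.ker (toLocalization n) := by
  refine Ideal.span_le.2 ?_
  rintro _ ⟨a, b, c, habc, rfl⟩
  simpa [toLocalization] using mul_add_mul_add_mul_eq_zero (xinv_mul_algebraMap a.1 a.2)
    (xinv_mul_algebraMap b.1 b.2) (xinv_mul_algebraMap c.1 c.2)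
    (by rw [← map_add, ← map_add, ← xlin_add, ← xlin_add, habc, xlin_zero, map_zero])

noncomputable def localizationToFracField (n : ℕ) :
    Localization (linForms n) →ₐ[ZMod 2] FracField n :=
  (Localization.mapToFractionRing (FracField n) (linForms n) _
    linForms_le_nonZeroDivisors).restrictScalars (ZMod 2)

theorem localizationToFracField_comp_toLocalization :
    (localizationToFracField n).comp (toLocalization n) = toFracField n :=
  MvPolynomial.algHom_ext fun a => by
    simp [localizationToFracField, toLocalization, toFracField, xinv, Localization.mk_eq_mk',
      IsLocalization.lift_mk'_spec, xlinFrac_ne_zero a.2]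

theorem ker_toLocalization : RingHom.ker (toLocalization n) = relIdeal n := by
  refine le_antisymm (fun p hp => ?_) relIdeal_le_ker_toLocalization
  obtain ⟨s, hs, r, hr, rfl⟩ := Submodule.mem_sup.1 (mem_standardSpan p)
  have hs0 : toLocalization n s = 0 := by
    simpa [RingHom.mem_ker.1 (relIdeal_le_ker_toLocalization hr)] using hp
  have hs0' : toFracField n s = 0 := by
    rw [← localizationToFracField_comp_toLocalization, AlgHom.comp_apply, hs0, map_zero]
  rwa [eq_zero_of_mem_span_standard hs hs0', zero_add]

theorem range_toLocalization :
    (toLocalization n : MvPolynomial (NonzeroVec n) (ZMod 2) →+* _).range =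
      Subring.closure (xinvSet n) := by
  refine le_antisymm ?_ (Subring.closure_le.2 fun _ ⟨α, hα, h⟩ =>
    ⟨X ⟨α, hα⟩, by simp [h, toLocalization]⟩)
  rintro _ ⟨p, rfl⟩
  induction p using MvPolynomial.induction_on with
  | C r =>
    rw [← ZMod.natCast_zmod_val r, map_natCast, RingHom.coe_coe, map_natCast]
    exact natCast_mem _ _
  | add p q hp hq => simpa using add_mem hp hq
  | mul_X p a hp =>
    simpa [toLocalization] using mul_mem hp (Subring.subset_closure ⟨a.1, a.2, rfl⟩)

end Localization

/-- `R` is isomorphic to the subring of the localization generated by the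
`x_α⁻¹`, via `y_α ↦ x_α⁻¹`. -/
theorem presentedRing_iso_subring (n : ℕ) :
    ∃ e : presentedRing n ≃+* Subring.closure (xinvSet n),
      ∀ (α : Fin n → ZMod 2) (hα : α ≠ 0),
        e (Ideal.Quotient.mk (relIdeal n) (X ⟨α, hα⟩)) =
          ⟨xinv α hα, Subring.subset_closure ⟨α, hα, rfl⟩⟩ :=
  ⟨(Ideal.quotEquivOfEq ker_toLocalization.symm).trans
    ((RingHom.quotientKerEquivRange _).trans (RingEquiv.subringCongr range_toLocalization)),
    fun _ _ => Subtype.ext (aeval_X _ _)⟩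
end

section
/- Let p be an odd prime, and let R = ℤ/p[t_α] ⊗ Λ[u_α] (α ∈ (ℤ/p)ⁿ∖{0}, t_α of degree −2, u_α of degree −1, subject to the relations of Theorem 1.2(b)). Then the assignment β(t_α) = 0, β(u_α) = 1, extended by the graded Leibniz rule β(ab) = β(a)b + (−1)^{|a|} a β(b), gives a well-defined ℤ/p-linear graded derivation β of R, i.e., β annihilates each defining relation. In particular β(−u_β u_{α+β} + u_α u_{α+β} − u_α u_β) = 0. -/
/-- for an odd prime `p`, a `ℤ/p`-linear map `β` on an algebra `R`
containing elements `t_α` (even degree) and `u_α` (odd degree), for nonzero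
`α ∈ (ℤ/p)ⁿ`, satisfying `β(t_α) = 0`, `β(u_α) = 1` and the graded Leibniz rule on
products with the generators, annihilates each defining relation of the ring of
Theorem 1.2(b); in particular `β(−u_βu_{α+β} + u_αu_{α+β} − u_αu_β) = 0`. -/
theorem bockstein_well_defined (p : ℕ) [Fact p.Prime] (hp2 : p ≠ 2) (n : ℕ)
    (R : Type) [Ring R] [Algebra (ZMod p) R]
    (t u : {α : Fin n → ZMod p // α ≠ 0} → R)
    (β : R →ₗ[ZMod p] R)
    (hβt0 : ∀ a, β (t a) = 0)
    (hβu1 : ∀ a, β (u a) = 1)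
    -- graded Leibniz rule `β(ab) = β(a)b + (−1)^{|a|}aβ(b)` for `a` a generator:
    (hLeibt : ∀ a x, β (t a * x) = β (t a) * x + t a * β x)
    (hLeibu : ∀ a x, β (u a * x) = β (u a) * x - u a * β x) :
    ∀ (a b c ia : {α : Fin n → ZMod p // α ≠ 0}) (i : ZMod p), i ≠ 0 →
      (ia : Fin n → ZMod p) = i • (a : Fin n → ZMod p) →
      (c : Fin n → ZMod p) = (a : Fin n → ZMod p) + b →
      (β (t ia - i⁻¹ • t a) = 0 ∧
       β (u ia - u a) = 0 ∧
       β (t b * t c + t a * t c - t a * t b) = 0 ∧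
       β (t b * u c - t c * u b + t c * u a - u a * t b) = 0 ∧
       β (-(u b * u c) + u a * u c - u a * u b) = 0) := by
  intro a b c ia i hi h1 h2
  refine ⟨?_, ?_, ?_, ?_, ?_⟩ <;>
    simp [map_sub, map_add, map_neg, map_smul, hLeibt, hLeibu, hβt0, hβu1]
end

section
/- Let P̃(x) = (1/(1−x)ⁿ)·∏_{i=1}^{n}(1 + (p^{i−1}−1)x) be a formal power series over ℚ. Then (1/(1+x))·P̃(x) = (1/((1−x²)(1−x)^{n−1}))·∏_{i=1}^{n}(1 + (p^{i−1}−1)x) as formal power series, and this power series has nonnegative integer coefficients. -/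
/-!
Since `1 - X² = (1 - X)(1 + X)`, dividing by `1 + X` trades one factor `(1 - X)⁻¹` for
`(1 - X²)⁻¹`. Every factor of the result has natural-number coefficients, because
`(1 - X^k)⁻¹ = ∑ⱼ X^(kj)` and `p^i - 1 ≥ 0`, so the product is the image of a series in `ℕ⟦X⟧`.
-/

open PowerSeries

theorem mk_dvd_indicator_mul_one_sub_X_pow {R : Type*} [Ring R] {k : ℕ} (hk : 0 < k) :
    (mk fun j => if k ∣ j then (1 : R) else 0) * (1 - X ^ k) = 1 := by
  ext j
  rw [mul_sub, mul_one, map_sub, coeff_mul_X_pow', coeff_mk, coeff_mk, coeff_one]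
  by_cases hkj : k ≤ j
  · have hj : j ≠ 0 := by omega
    have hdvd : k ∣ j - k ↔ k ∣ j := by
      rw [Nat.dvd_sub_self_right]
      exact or_iff_left_of_imp fun h => le_antisymm h hkj ▸ dvd_rfl
    simp [hkj, hj, hdvd]
  · have hdvd : k ∣ j ↔ j = 0 :=
      ⟨fun h => Nat.eq_zero_of_dvd_of_lt h (by omega), fun h => h ▸ dvd_zero k⟩
    simp [hkj, hdvd]

section

variable {K : Type*} [Field K]

theorem inv_one_sub_X_pow_eq_map {k : ℕ} (hk : 0 < k) :
    (1 - X ^ k : K⟦X⟧)⁻¹ = map (Nat.castRingHom K) (mk fun j => if k ∣ j then 1 else 0) := by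
  have hmap : map (Nat.castRingHom K) (mk fun j => if k ∣ j then 1 else 0) =
      mk fun j => if k ∣ j then 1 else 0 := by
    ext j
    simp [apply_ite]
  rw [eq_comm, eq_inv_iff_mul_eq_one (by simp [hk.ne']), hmap]
  exact mk_dvd_indicator_mul_one_sub_X_pow hk

theorem one_add_C_sub_one_mul_X_eq_map {m : ℕ} (hm : 1 ≤ m) :
    (1 + C ((m : K) - 1) * X : K⟦X⟧) = map (Nat.castRingHom K) (1 + C (m - 1) * X) := by
  simp [Nat.cast_sub hm]

theorem inv_one_add_X_mul_inv_one_sub_X_pow {n : ℕ} (hn : 1 ≤ n) :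
    (1 + X : K⟦X⟧)⁻¹ * (1 - X)⁻¹ ^ n = (1 - X ^ 2)⁻¹ * (1 - X)⁻¹ ^ (n - 1) := by
  obtain ⟨m, rfl⟩ := Nat.exists_eq_add_of_le' hn
  rw [show (1 - X ^ 2 : K⟦X⟧) = (1 - X) * (1 + X) by ring, PowerSeries.mul_inv_rev,
    Nat.add_sub_cancel, pow_succ']
  ring

end

/-- with `P̃(x) = (1/(1−x)ⁿ)∏_{i=1}^{n}(1+(p^{i−1}−1)x)` in `ℚ[[x]]`,
one has `P̃(x)/(1+x) = (1/((1−x²)(1−x)^{n−1}))∏_{i=1}^{n}(1+(p^{i−1}−1)x)`, and this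
power series has nonnegative integer coefficients. -/
theorem poincare_series_identity (p n : ℕ) (hp : 2 ≤ p) (hn : 1 ≤ n) :
    (1 + X : PowerSeries ℚ)⁻¹ *
        (((1 - X : PowerSeries ℚ)⁻¹) ^ n *
          ∏ i ∈ Finset.range n, (1 + PowerSeries.C ((p : ℚ) ^ i - 1) * X)) =
      ((1 - X ^ 2 : PowerSeries ℚ)⁻¹ * ((1 - X : PowerSeries ℚ)⁻¹) ^ (n - 1)) *
        ∏ i ∈ Finset.range n, (1 + PowerSeries.C ((p : ℚ) ^ i - 1) * X) ∧
    ∀ k : ℕ, ∃ m : ℕ,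
      (PowerSeries.coeff (R := ℚ) k)
        ((1 + X : PowerSeries ℚ)⁻¹ *
          (((1 - X : PowerSeries ℚ)⁻¹) ^ n *
            ∏ i ∈ Finset.range n, (1 + PowerSeries.C ((p : ℚ) ^ i - 1) * X))) = m := by
  have identity : (1 + X : ℚ⟦X⟧)⁻¹ * ((1 - X)⁻¹ ^ n *
      ∏ i ∈ Finset.range n, (1 + C ((p : ℚ) ^ i - 1) * X)) =
        ((1 - X ^ 2)⁻¹ * (1 - X)⁻¹ ^ (n - 1)) *
          ∏ i ∈ Finset.range n, (1 + C ((p : ℚ) ^ i - 1) * X) := by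
    rw [← mul_assoc, inv_one_add_X_mul_inv_one_sub_X_pow hn]
  refine ⟨identity, fun k => ?_⟩
  have hmem : ((1 - X ^ 2 : ℚ⟦X⟧)⁻¹ * (1 - X)⁻¹ ^ (n - 1)) *
      ∏ i ∈ Finset.range n, (1 + C ((p : ℚ) ^ i - 1) * X) ∈
        (map (Nat.castRingHom ℚ)).rangeS := by
    refine mul_mem (mul_mem ?_ (pow_mem ?_ _)) (prod_mem fun i _ => ?_)
    · exact ⟨_, (inv_one_sub_X_pow_eq_map two_pos).symm⟩
    · rw [← pow_one X]
      exact ⟨_, (inv_one_sub_X_pow_eq_map one_pos).symm⟩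
    · rw [← Nat.cast_pow]
      exact ⟨_, (one_add_C_sub_one_mul_X_eq_map (Nat.one_le_pow i p (by omega))).symm⟩
  obtain ⟨f, hf⟩ := hmem
  exact ⟨coeff k f, by rw [identity, ← hf, coeff_map, eq_natCast]⟩
end
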